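/- Let d ≥ 1, 1 ≤ k ≤ n, and let φ be a pure state (rank-one projection onto a unit vector) on ℂ^d. Then D(φ^{⊗n}‖π_sym^{d,n}) − D(P_{n→k}(φ^{⊗n})‖P_{n→k}(π_sym^{d,n})) = −log(d[k]/d[n]) = log(d[n]/d[k]). -/

import Mathlib

open scoped BigOperators Matrix Kronecker ComplexOrder
open Matrix

noncomputable section

variable {ι : Type*} [Fintype ι] [DecidableEq ι]

/-- Apply a real-scalar function to a Hermitian matrix via the spectral decomposition
(junk value `0` on non-Hermitian matrices). -/
def hermFun (f : ℝ → ℂ) (A : Matrix ι ι ℂ) : Matrix ι ι ℂ :=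
  if hA : A.IsHermitian then
    (hA.eigenvectorUnitary : Matrix ι ι ℂ) * Matrix.diagonal (fun i => f (hA.eigenvalues i)) *
      (star (hA.eigenvectorUnitary : Matrix ι ι ℂ))
  else 0

/-- Matrix logarithm (on the support; natural logarithm). -/
def matLog (A : Matrix ι ι ℂ) : Matrix ι ι ℂ := hermFun (fun x => (Real.log x : ℂ)) A

/-- Matrix square root of a Hermitian (e.g. positive semidefinite) matrix. -/
def matSqrt (A : Matrix ι ι ℂ) : Matrix ι ι ℂ := hermFun (fun x => (Real.sqrt x : ℂ)) A

/-- Complex matrix power with the Moore–Penrose convention (inverse powers taken on the support). -/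
def matCPow (A : Matrix ι ι ℂ) (z : ℂ) : Matrix ι ι ℂ :=
  hermFun (fun x => if x = 0 then 0 else (x : ℂ) ^ z) A

/-- A state (density operator). -/
def IsState (ρ : Matrix ι ι ℂ) : Prop := ρ.PosSemidef ∧ ρ.trace = 1

/-- Quantum relative entropy `D(ρ‖σ) = tr[ρ (log ρ - log σ)]`. -/
def relEnt (ρ σ : Matrix ι ι ℂ) : ℝ := ((ρ * (matLog ρ - matLog σ)).trace).re

/-- von Neumann entropy `H(ρ) = -tr[ρ log ρ]`. -/
def vnEntropy (ρ : Matrix ι ι ℂ) : ℝ := -((ρ * matLog ρ).trace).re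

/-- Trace norm `‖X‖₁ = tr √(X† X)`. -/
def traceNorm (X : Matrix ι ι ℂ) : ℝ := ((matSqrt (Xᴴ * X)).trace).re

/-- Fidelity `F(ρ,σ) = ‖√ρ √σ‖₁²`. -/
def fidelity (ρ σ : Matrix ι ι ℂ) : ℝ := (traceNorm (matSqrt ρ * matSqrt σ)) ^ 2

variable {A B : Type*} [Fintype A] [DecidableEq A] [Fintype B] [DecidableEq B]

/-- The extension `Λ ⊗ id_m` of a map on matrices. -/
def extendChan (Λ : Matrix A A ℂ →ₗ[ℂ] Matrix B B ℂ) {m : Type*} [Fintype m]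
    (M : Matrix (A × m) (A × m) ℂ) : Matrix (B × m) (B × m) ℂ :=
  fun p q => Λ (fun a a' => M (a, p.2) (a', q.2)) p.1 q.1

/-- A quantum channel: a completely positive trace-preserving linear map. -/
structure IsQChannel (Λ : Matrix A A ℂ →ₗ[ℂ] Matrix B B ℂ) : Prop where
  tp : ∀ M, (Λ M).trace = M.trace
  cp : ∀ (m : ℕ) (M : Matrix (A × Fin m) (A × Fin m) ℂ), M.PosSemidef →
    (extendChan Λ M).PosSemidef

/-- The marginal of a state of `n` systems on the `j`-th system. -/
def marginal {n : ℕ} (ρ : Matrix (Fin n → ι) (Fin n → ι) ℂ) (j : Fin n) :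
    Matrix ι ι ℂ :=
  fun a b => ∑ f : {i : Fin n // i ≠ j} → ι,
      ρ (fun i => if h : i = j then a else f ⟨i, h⟩)
        (fun i => if h : i = j then b else f ⟨i, h⟩)

/-- `n`-fold tensor power of a matrix. -/
def tpow (σ : Matrix ι ι ℂ) (n : ℕ) : Matrix (Fin n → ι) (Fin n → ι) ℂ :=
  fun f g => ∏ i, σ (f i) (g i)

/-- Partial trace over the last `n - k` tensor factors. -/
def ptraceLast {n k : ℕ} (h : k ≤ n) (ρ : Matrix (Fin n → ι) (Fin n → ι) ℂ) :
    Matrix (Fin k → ι) (Fin k → ι) ℂ :=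
  fun a b => ∑ z : Fin (n - k) → ι,
    ρ (fun i => if h' : (i : ℕ) < k then a ⟨i, h'⟩ else z ⟨(i : ℕ) - k, by have := i.isLt; omega⟩)
      (fun i => if h' : (i : ℕ) < k then b ⟨i, h'⟩ else z ⟨(i : ℕ) - k, by have := i.isLt; omega⟩)

/-- Permutation matrix acting on `(ℂ^d)^{⊗ n}`. -/
def permMat (d n : ℕ) (π : Equiv.Perm (Fin n)) :
    Matrix (Fin n → Fin d) (Fin n → Fin d) ℂ :=
  fun f g => if g = f ∘ π then 1 else 0

/-- Orthogonal projection onto the symmetric subspace of `(ℂ^d)^{⊗ n}`. -/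
def symProj (d n : ℕ) : Matrix (Fin n → Fin d) (Fin n → Fin d) ℂ :=
  ((n.factorial : ℂ))⁻¹ • ∑ π : Equiv.Perm (Fin n), permMat d n π

/-- Dimension `d[n] = C(d+n-1, n)` of the symmetric subspace. -/
def dsym (d n : ℕ) : ℕ := (d + n - 1).choose n

/-- Maximally mixed state on the symmetric subspace. -/
def piSym (d n : ℕ) : Matrix (Fin n → Fin d) (Fin n → Fin d) ℂ :=
  ((dsym d n : ℂ))⁻¹ • symProj d n

/-- Tensoring a matrix on the first `k` factors with the identity on the last `n-k` factors. -/
def extendId {d k n : ℕ} (h : k ≤ n) (M : Matrix (Fin k → Fin d) (Fin k → Fin d) ℂ) :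
    Matrix (Fin n → Fin d) (Fin n → Fin d) ℂ :=
  fun f g => (if ∀ i : Fin n, k ≤ (i : ℕ) → f i = g i then 1 else 0) *
    M (fun i => f (Fin.castLE h i)) (fun i => g (Fin.castLE h i))

/-- The universal quantum cloning machine `C_{k→n}`. -/
def uqcm (d : ℕ) {k n : ℕ} (h : k ≤ n) (ω : Matrix (Fin k → Fin d) (Fin k → Fin d) ℂ) :
    Matrix (Fin n → Fin d) (Fin n → Fin d) ℂ :=
  (((dsym d k : ℂ)) / ((dsym d n : ℂ))) •
    (symProj d n * extendId h (symProj d k * ω * symProj d k) * symProj d n)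

/-- The symmetrized partial trace channel `P_{n→k}`. -/
def symPTrace (d : ℕ) {k n : ℕ} (h : k ≤ n) (ω : Matrix (Fin n → Fin d) (Fin n → Fin d) ℂ) :
    Matrix (Fin k → Fin d) (Fin k → Fin d) ℂ :=
  symProj d k * ptraceLast h (symProj d n * ω * symProj d n) * symProj d k

/-- Orthogonal projection onto the antisymmetric subspace of `(ℂ^d)^{⊗ n}`. -/
def antiProj (d n : ℕ) : Matrix (Fin n → Fin d) (Fin n → Fin d) ℂ :=
  ((n.factorial : ℂ))⁻¹ • ∑ π : Equiv.Perm (Fin n), ((Equiv.Perm.sign π : ℤ) : ℂ) • permMat d n π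

/-- Maximally mixed state on the antisymmetric subspace. -/
def piAnti (d n : ℕ) : Matrix (Fin n → Fin d) (Fin n → Fin d) ℂ :=
  ((d.choose n : ℂ))⁻¹ • antiProj d n

/-- The antisymmetric cloning machine. -/
def antiClone (d : ℕ) {k n : ℕ} (h : k ≤ n) (ω : Matrix (Fin k → Fin d) (Fin k → Fin d) ℂ) :
    Matrix (Fin n → Fin d) (Fin n → Fin d) ℂ :=
  (((d.choose k : ℂ)) / ((d.choose n : ℂ))) •
    (antiProj d n * extendId h (antiProj d k * ω * antiProj d k) * antiProj d n)

/-- The antisymmetrized partial trace. -/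
def antiPTrace (d : ℕ) {k n : ℕ} (h : k ≤ n) (ω : Matrix (Fin n → Fin d) (Fin n → Fin d) ℂ) :
    Matrix (Fin k → Fin d) (Fin k → Fin d) ℂ :=
  antiProj d k * ptraceLast h (antiProj d n * ω * antiProj d n) * antiProj d k

/-- Rank-one projection (outer product) `|v⟩⟨v|`. -/
def outer {α : Type*} (v : α → ℂ) : Matrix α α ℂ :=
  fun x y => v x * (starRingEnd ℂ) (v y)

/-- Slater determinant vector `φ₁ ∧ ⋯ ∧ φ_k`. -/
def slater {d k : ℕ} (w : Fin k → (Fin d → ℂ)) : (Fin k → Fin d) → ℂ :=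
  fun f => ((Real.sqrt k.factorial : ℂ))⁻¹ *
    ∑ π : Equiv.Perm (Fin k), ((Equiv.Perm.sign π : ℤ) : ℂ) * ∏ i, w (π i) (f i)

/-- Partial trace over the second tensor factor. -/
def trB {ιA ιB : Type*} [Fintype ιB] (ρ : Matrix (ιA × ιB) (ιA × ιB) ℂ) : Matrix ιA ιA ℂ :=
  fun a a' => ∑ b, ρ (a, b) (a', b)

/-- Partial trace over the first tensor factor. -/
def trA {ιA ιB : Type*} [Fintype ιA] (ρ : Matrix (ιA × ιB) (ιA × ιB) ℂ) : Matrix ιB ιB ℂ :=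
  fun b b' => ∑ a, ρ (a, b) (a, b')

/-- The probability density `β(t) = (π/2)(1 + cosh(π t))⁻¹`. -/
def betaDens (t : ℝ) : ℝ := (Real.pi / 2) * (1 + Real.cosh (Real.pi * t))⁻¹

/-- Rotated Petz recovery map `R^t_{A,X}`, mapping operators on `B` to operators on `A ⊗ B`. -/
def petzA {ιA ιB : Type*} [Fintype ιA] [DecidableEq ιA] [Fintype ιB] [DecidableEq ιB]
    (t : ℝ) (X : Matrix (ιA × ιB) (ιA × ιB) ℂ) (Y : Matrix ιB ιB ℂ) :
    Matrix (ιA × ιB) (ιA × ιB) ℂ :=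
  matCPow X ((1 + t * Complex.I) / 2) *
    ((1 : Matrix ιA ιA ℂ) ⊗ₖ
      (matCPow (trA X) (-(1 + t * Complex.I) / 2) * Y * matCPow (trA X) (-(1 - t * Complex.I) / 2))) *
    matCPow X ((1 - t * Complex.I) / 2)

/-- Rotated Petz recovery map `R^t_{B,X}`, mapping operators on `A` to operators on `A ⊗ B`. -/
def petzB {ιA ιB : Type*} [Fintype ιA] [DecidableEq ιA] [Fintype ιB] [DecidableEq ιB]
    (t : ℝ) (X : Matrix (ιA × ιB) (ιA × ιB) ℂ) (Y : Matrix ιA ιA ℂ) :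
    Matrix (ιA × ιB) (ιA × ιB) ℂ :=
  matCPow X ((1 + t * Complex.I) / 2) *
    ((matCPow (trB X) (-(1 + t * Complex.I) / 2) * Y * matCPow (trB X) (-(1 - t * Complex.I) / 2)) ⊗ₖ
      (1 : Matrix ιB ιB ℂ)) *
    matCPow X ((1 - t * Complex.I) / 2)

/-- Cloning map between two general subspaces, given by their orthogonal projections. -/
def genClone {d k n : ℕ} (h : k ≤ n) (dX dY : ℕ)
    (PX : Matrix (Fin n → Fin d) (Fin n → Fin d) ℂ)
    (PY : Matrix (Fin k → Fin d) (Fin k → Fin d) ℂ)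
    (ω : Matrix (Fin k → Fin d) (Fin k → Fin d) ℂ) :
    Matrix (Fin n → Fin d) (Fin n → Fin d) ℂ :=
  (((dY : ℂ)) / ((dX : ℂ))) • (PX * extendId h (PY * ω * PY) * PX)

/-- Partial trace channel between two general subspaces. -/
def genPTrace {d k n : ℕ} (h : k ≤ n)
    (PX : Matrix (Fin n → Fin d) (Fin n → Fin d) ℂ)
    (PY : Matrix (Fin k → Fin d) (Fin k → Fin d) ℂ)
    (ω : Matrix (Fin n → Fin d) (Fin n → Fin d) ℂ) :
    Matrix (Fin k → Fin d) (Fin k → Fin d) ℂ :=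
  PY * ptraceLast h (PX * ω * PX) * PY

end


/-!
`φ^{⊗n}` is the rank-one projection onto a unit vector of the symmetric subspace. For a pure state
`ρ ≤ Π` one has `log ρ = 0` and `log (t • Π) = log t • Π`, so `D(ρ ‖ t • Π) = -log t`; hence
`D(φ^{⊗n} ‖ π_sym^{d,n}) = log d[n]`. The channel `P_{n→k}` maps `φ^{⊗n}` to `φ^{⊗k}` and
`π_sym^{d,n}` to `π_sym^{d,k}`, the latter because `tr_{n-k} Π_sym^{d,n} = (d[n]/d[k]) Π_sym^{d,k}`.
That is a counting identity: the entry of `Π_sym^{d,n}` at two words with the same letter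
multiplicities `μ` is `∏ μ_c! / n!` (the number of permutations carrying one word to the other),
and summing over the traced-out letters produces the ratio of ascending factorials
`d (d+1) ⋯ (d+n-1) / (d (d+1) ⋯ (d+k-1)) = n! d[n] / (k! d[k])`.
-/

open Finset Nat

section MatrixLog

variable {ι : Type*} [Fintype ι] [DecidableEq ι]

lemma matLog_eq_cfc {A : Matrix ι ι ℂ} (hA : A.IsHermitian) : matLog A = cfc Real.log A := by
  rw [hA.cfc_eq, IsHermitian.cfc, matLog, hermFun, dif_pos hA, Unitary.conjStarAlgAut_apply]
  rfl

/-- `log (t x) = log t * x` on the spectrum `{0, 1}` of `P`, by the convention `log 0 = 0`. -/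
lemma matLog_smul_of_isStarProjection {P : Matrix ι ι ℂ} (hP : IsStarProjection P) (t : ℝ) :
    matLog ((t : ℂ) • P) = (Real.log t : ℂ) • P := by
  have hspec := (isIdempotentElem_iff_spectrum_subset ℝ P hP.isSelfAdjoint).mp hP.isIdempotentElem
  rw [Complex.coe_smul, Complex.coe_smul,
    matLog_eq_cfc ((IsSelfAdjoint.all t).smul hP.isSelfAdjoint),
    ← cfc_comp_const_mul t Real.log P ((P.finite_real_spectrum.image _).continuousOn _)
      hP.isSelfAdjoint,
    cfc_congr (g := fun x => Real.log t * x), cfc_const_mul_id (Real.log t) P hP.isSelfAdjoint]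
  intro x hx
  rcases hspec hx with rfl | rfl <;> simp

lemma matLog_of_isStarProjection {P : Matrix ι ι ℂ} (hP : IsStarProjection P) : matLog P = 0 := by
  simpa using matLog_smul_of_isStarProjection hP 1

lemma relEnt_smul_of_isStarProjection {ρ P : Matrix ι ι ℂ} (hρ : IsStarProjection ρ)
    (hρ_trace : ρ.trace = 1) (hP : IsStarProjection P) (hρP : ρ * P = ρ) (t : ℝ) :
    relEnt ρ ((t : ℂ) • P) = -Real.log t := by
  rw [relEnt, matLog_of_isStarProjection hρ, matLog_smul_of_isStarProjection hP, zero_sub,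
    Matrix.mul_neg, Matrix.mul_smul, hρP, trace_neg, trace_smul, hρ_trace]
  simp

end MatrixLog

section RankOne

variable {α : Type*}

lemma isHermitian_outer (v : α → ℂ) : (outer v).IsHermitian := by
  ext x y
  simp [outer, mul_comm]

variable [Fintype α]

lemma trace_outer (v : α → ℂ) : (outer v).trace = ∑ x, (Complex.normSq (v x) : ℂ) := by
  simp [outer, Matrix.trace, Complex.mul_conj]

lemma trace_outer_of_sum_normSq {v : α → ℂ} (hv : ∑ x, Complex.normSq (v x) = 1) :
    (outer v).trace = 1 := by
  rw [trace_outer, ← Complex.ofReal_sum, hv, Complex.ofReal_one]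

lemma outer_mul_outer (v : α → ℂ) :
    outer v * outer v = (∑ x, (Complex.normSq (v x) : ℂ)) • outer v := by
  ext x y
  simp only [outer, mul_apply, Matrix.smul_apply, smul_eq_mul, sum_mul]
  refine sum_congr rfl fun z _ => ?_
  rw [← Complex.mul_conj]
  ring

lemma isStarProjection_outer [DecidableEq α] {v : α → ℂ} (hv : ∑ x, Complex.normSq (v x) = 1) :
    IsStarProjection (outer v) where
  isIdempotentElem := by
    rw [IsIdempotentElem, outer_mul_outer, ← trace_outer, trace_outer_of_sum_normSq hv, one_smul]
  isSelfAdjoint := isHermitian_outer v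

end RankOne

section TensorPower

variable {ι : Type*}

def tensorPowVec (u : ι → ℂ) (n : ℕ) : (Fin n → ι) → ℂ := fun f => ∏ i, u (f i)

lemma tpow_outer (u : ι → ℂ) (n : ℕ) : tpow (outer u) n = outer (tensorPowVec u n) := by
  ext f g
  simp [tpow, outer, tensorPowVec, prod_mul_distrib]

lemma tensorPowVec_comp_perm (u : ι → ℂ) {n : ℕ} (π : Equiv.Perm (Fin n)) (f : Fin n → ι) :
    tensorPowVec u n (f ∘ π) = tensorPowVec u n f :=
  Equiv.prod_comp π fun i => u (f i)

lemma tpow_append_cast_apply (σ : Matrix ι ι ℂ) {k l n : ℕ} (hn : n = k + l) (a b : Fin k → ι)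
    (z w : Fin l → ι) :
    tpow σ n (Fin.append a z ∘ Fin.cast hn) (Fin.append b w ∘ Fin.cast hn) =
      tpow σ k a b * tpow σ l z w := by
  subst hn
  simp [tpow, Fin.prod_univ_add]

variable [Fintype ι]

lemma sum_normSq_tensorPowVec (u : ι → ℂ) (n : ℕ) :
    ∑ f, Complex.normSq (tensorPowVec u n f) = (∑ a, Complex.normSq (u a)) ^ n := by
  simp [tensorPowVec, Fintype.sum_pow]

lemma ptraceLast_apply {n k : ℕ} (h : k ≤ n) (M : Matrix (Fin n → ι) (Fin n → ι) ℂ)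
    (a b : Fin k → ι) :
    ptraceLast h M a b = ∑ z : Fin (n - k) → ι,
      M (Fin.append a z ∘ Fin.cast (Nat.add_sub_of_le h).symm)
        (Fin.append b z ∘ Fin.cast (Nat.add_sub_of_le h).symm) := by
  refine sum_congr rfl fun z _ => ?_
  congr 1 <;> funext i <;> simp [Fin.append, Fin.addCases, Fin.subNat, Fin.castLT]

lemma ptraceLast_smul {n k : ℕ} (h : k ≤ n) (c : ℂ) (M : Matrix (Fin n → ι) (Fin n → ι) ℂ) :
    ptraceLast h (c • M) = c • ptraceLast h M := by
  ext a b
  simp [ptraceLast_apply, mul_sum]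

lemma ptraceLast_tpow {n k : ℕ} (h : k ≤ n) (σ : Matrix ι ι ℂ) :
    ptraceLast h (tpow σ n) = σ.trace ^ (n - k) • tpow σ k := by
  ext a b
  rw [ptraceLast_apply, Matrix.smul_apply, smul_eq_mul, mul_comm]
  simp only [tpow_append_cast_apply, ← mul_sum]
  congr 1
  simp [tpow, Matrix.trace, Fintype.sum_pow]

end TensorPower

section SymmetricProjector

variable {d m : ℕ}

lemma permMat_mul_apply (π : Equiv.Perm (Fin m)) (M : Matrix (Fin m → Fin d) (Fin m → Fin d) ℂ)
    (f g : Fin m → Fin d) : (permMat d m π * M) f g = M (f ∘ π) g := by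
  simp [permMat, mul_apply]

lemma permMat_mul_permMat (π σ : Equiv.Perm (Fin m)) :
    permMat d m π * permMat d m σ = permMat d m (π * σ) := by
  ext f g
  rw [permMat_mul_apply]
  rfl

lemma symProj_mul_of_forall_permMat_mul {M : Matrix (Fin m → Fin d) (Fin m → Fin d) ℂ}
    (hM : ∀ π, permMat d m π * M = M) : symProj d m * M = M := by
  rw [symProj, Matrix.smul_mul, sum_mul]
  simp [hM, Fintype.card_perm, ← Nat.cast_smul_eq_nsmul ℂ, smul_smul, Nat.factorial_ne_zero]

lemma permMat_mul_symProj (π : Equiv.Perm (Fin m)) : permMat d m π * symProj d m = symProj d m := by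
  rw [symProj, Matrix.mul_smul, mul_sum]
  simp_rw [permMat_mul_permMat]
  congr 1
  exact Fintype.sum_equiv (Equiv.mulLeft π) _ _ fun σ => rfl

lemma permMat_conjTranspose (π : Equiv.Perm (Fin m)) : (permMat d m π)ᴴ = permMat d m π⁻¹ := by
  ext f g
  have hiff : f = g ∘ π ↔ g = f ∘ ⇑π⁻¹ := by
    constructor <;> rintro rfl <;> ext i <;> simp
  rw [conjTranspose_apply, permMat, permMat, if_congr hiff rfl rfl]
  split_ifs <;> simp

lemma isStarProjection_symProj : IsStarProjection (symProj d m) where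
  isIdempotentElem := symProj_mul_of_forall_permMat_mul permMat_mul_symProj
  isSelfAdjoint := by
    rw [IsSelfAdjoint, symProj, star_smul, star_sum]
    simp only [star_eq_conjTranspose, permMat_conjTranspose]
    rw [Fintype.sum_equiv (Equiv.inv _) (fun π => permMat d m π⁻¹) (permMat d m) fun σ => rfl]
    simp

lemma symProj_mul_self : symProj d m * symProj d m = symProj d m :=
  isStarProjection_symProj.isIdempotentElem.eq

end SymmetricProjector

section Counting

variable {α ι : Type*} [Fintype α] [DecidableEq ι]

def fiberCard (f : α → ι) (c : ι) : ℕ := Fintype.card {i // f i = c}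

lemma fiberCard_eq_sum (f : α → ι) (c : ι) : fiberCard f c = ∑ i, if f i = c then 1 else 0 := by
  rw [fiberCard, Fintype.card_subtype, card_filter]

lemma fiberCard_cons {m : ℕ} (x : ι) (z : Fin m → ι) :
    fiberCard (Fin.cons x z : Fin (m + 1) → ι) = Pi.single x 1 + fiberCard z := by
  ext c
  simp only [fiberCard_eq_sum, Fin.sum_univ_succ, Fin.cons_zero, Fin.cons_succ, Pi.add_apply,
    Pi.single_apply, eq_comm]

lemma fiberCard_append_cast {k l n : ℕ} (hn : n = k + l) (a : Fin k → ι) (z : Fin l → ι) :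
    fiberCard (Fin.append a z ∘ Fin.cast hn) = fiberCard a + fiberCard z := by
  subst hn
  ext c
  simp only [fiberCard_eq_sum, Function.comp_apply, Fin.cast_eq_self, Fin.sum_univ_add,
    Fin.append_left, Fin.append_right, Pi.add_apply]

def permCompEqEquiv (f g : α → ι) :
    {π : Equiv.Perm α // f ∘ π = g} ≃ ((c : ι) → {i // g i = c} ≃ {i // f i = c}) where
  toFun π c :=
    { toFun i := ⟨π.1 i.1, (congrFun π.2 i.1).trans i.2⟩
      invFun j := ⟨π.1.symm j.1, by
        rw [← congrFun π.2, Function.comp_apply, Equiv.apply_symm_apply, j.2]⟩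
      left_inv i := Subtype.ext (π.1.symm_apply_apply i.1)
      right_inv j := Subtype.ext (π.1.apply_symm_apply j.1) }
  invFun e := ⟨Equiv.ofFiberEquiv e, funext fun i => Equiv.ofFiberEquiv_map e i⟩
  left_inv π := rfl
  right_inv e := by
    funext c
    ext ⟨i, rfl⟩
    rfl

variable [Fintype ι]

lemma sum_fiberCard (f : α → ι) : ∑ c, fiberCard f c = Fintype.card α := by
  simp only [fiberCard]
  rw [← Fintype.card_sigma, Fintype.card_congr (Equiv.sigmaFiberEquiv f)]

lemma card_perm_comp_eq [DecidableEq α] (f g : α → ι) :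
    Fintype.card {π : Equiv.Perm α // f ∘ π = g} =
      if ∀ c, fiberCard g c = fiberCard f c then ∏ c, (fiberCard f c)! else 0 := by
  rw [Fintype.card_congr (permCompEqEquiv f g), Fintype.card_pi]
  split_ifs with h
  · exact prod_congr rfl fun c _ => by
      rw [Fintype.card_equiv (Fintype.equivOfCardEq (h c))]
      exact congrArg Nat.factorial (h c)
  · obtain ⟨c, hc⟩ := not_forall.mp h
    exact prod_eq_zero (mem_univ c)
      (Fintype.card_eq_zero_iff.mpr ⟨fun e => hc (Fintype.card_congr e)⟩)

lemma prod_factorial_add_single (μ : ι → ℕ) (x : ι) :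
    ∏ c, (((μ + Pi.single x 1 : ι → ℕ)) c)! = (μ x + 1) * ∏ c, (μ c)! := by
  rw [Fintype.prod_eq_mul_prod_compl x, Fintype.prod_eq_mul_prod_compl x (fun c => (μ c)!),
    ← mul_assoc, Pi.add_apply, Pi.single_eq_same, factorial_succ]
  congr 1
  refine prod_congr rfl fun c hc => ?_
  rw [Pi.add_apply, Pi.single_eq_of_ne (by simpa using hc), add_zero]

/-- Peeling off the first letter of `z` and summing the induction hypothesis over it produces the
factor `∑ x, (μ x + 1) = card ι + ∑ μ`, one step of the ascending factorial. -/
lemma sum_prod_factorial_add_fiberCard [Nonempty ι] (m : ℕ) (μ : ι → ℕ) :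
    (∑ z : Fin m → ι, ∏ c, (μ c + fiberCard z c)!) * (Fintype.card ι).ascFactorial (∑ c, μ c) =
      (Fintype.card ι).ascFactorial (∑ c, μ c + m) * ∏ c, (μ c)! := by
  induction m generalizing μ with
  | zero => simp [fiberCard_eq_sum, mul_comm]
  | succ m ih =>
    set K := ∑ c, μ c
    have hmass (x : ι) : ∑ c, (μ + Pi.single x 1 : ι → ℕ) c = K + 1 := by
      simp [K, sum_add_distrib]
    have hpeel : ∑ z : Fin (m + 1) → ι, ∏ c, (μ c + fiberCard z c)! =
        ∑ x, ∑ z : Fin m → ι, ∏ c, (((μ + Pi.single x 1 : ι → ℕ)) c + fiberCard z c)! := by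
      rw [← (Fin.consEquiv fun _ => ι).sum_comp, Fintype.sum_prod_type]
      simp [Fin.consEquiv, fiberCard_cons, add_assoc]
    apply Nat.eq_of_mul_eq_mul_right (show 0 < Fintype.card ι + K by positivity)
    calc (∑ z : Fin (m + 1) → ι, ∏ c, (μ c + fiberCard z c)!) *
          (Fintype.card ι).ascFactorial K * (Fintype.card ι + K)
        = ∑ x, (∑ z : Fin m → ι, ∏ c, (((μ + Pi.single x 1 : ι → ℕ)) c + fiberCard z c)!) *
            (Fintype.card ι).ascFactorial (K + 1) := by
          rw [hpeel, ascFactorial_succ, ← sum_mul]; ring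
      _ = ∑ x, (Fintype.card ι).ascFactorial (K + 1 + m) * ((μ x + 1) * ∏ c, (μ c)!) := by
          refine sum_congr rfl fun x _ => ?_
          rw [← hmass x, ih, hmass x, prod_factorial_add_single]
      _ = (Fintype.card ι).ascFactorial (K + (m + 1)) * (∏ c, (μ c)!) * (Fintype.card ι + K) := by
          rw [← mul_sum, ← sum_mul, sum_add_distrib, add_right_comm K 1 m, add_assoc K m 1]
          simp only [sum_const, Finset.card_univ, smul_eq_mul, mul_one, K]
          ring

end Counting

section SymmetricSubspace

variable {d : ℕ}

lemma permMat_mul_outer_of_comp_perm {m : ℕ} {v : (Fin m → Fin d) → ℂ} (π : Equiv.Perm (Fin m))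
    (hv : ∀ f, v (f ∘ π) = v f) : permMat d m π * outer v = outer v := by
  ext f g
  simp [permMat_mul_apply, outer, hv]

lemma symProj_mul_tpow_outer (m : ℕ) (u : Fin d → ℂ) :
    symProj d m * tpow (outer u) m = tpow (outer u) m := by
  rw [tpow_outer]
  exact symProj_mul_of_forall_permMat_mul fun π =>
    permMat_mul_outer_of_comp_perm π (tensorPowVec_comp_perm u π)

lemma tpow_outer_mul_symProj (m : ℕ) (u : Fin d → ℂ) :
    tpow (outer u) m * symProj d m = tpow (outer u) m := by
  have h := congrArg conjTranspose (symProj_mul_tpow_outer m u)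
  rwa [conjTranspose_mul, tpow_outer, isHermitian_outer,
    isStarProjection_symProj.isSelfAdjoint.isHermitian, ← tpow_outer] at h

lemma symProj_apply {m : ℕ} (f g : Fin m → Fin d) :
    symProj d m f g = (Fintype.card {π : Equiv.Perm (Fin m) // f ∘ π = g} : ℂ) / m ! := by
  simp only [symProj, Matrix.smul_apply, Matrix.sum_apply, permMat, smul_eq_mul, eq_comm (a := g)]
  rw [sum_boole, Fintype.card_subtype, inv_mul_eq_div]

lemma dsym_pos [NeZero d] (m : ℕ) : 0 < dsym d m :=
  Nat.choose_pos (by have := NeZero.pos d; omega)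

lemma ptraceLast_symProj [NeZero d] {n k : ℕ} (h : k ≤ n) :
    ptraceLast h (symProj d n) = ((dsym d n : ℂ) / dsym d k) • symProj d k := by
  ext a b
  rw [ptraceLast_apply, Matrix.smul_apply, symProj_apply]
  simp_rw [symProj_apply, card_perm_comp_eq, fiberCard_append_cast, Pi.add_apply, add_left_inj]
  split_ifs
  · have key := sum_prod_factorial_add_fiberCard (n - k) (fiberCard a)
    rw [sum_fiberCard, Fintype.card_fin, Fintype.card_fin, add_tsub_cancel_of_le h,
      ascFactorial_eq_factorial_mul_choose', ascFactorial_eq_factorial_mul_choose'] at key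
    have hkey : ((∑ z : Fin (n - k) → Fin d, ∏ c, (fiberCard a c + fiberCard z c)! : ℕ) : ℂ) *
        (k ! * dsym d k) = n ! * dsym d n * ((∏ c, (fiberCard a c)! : ℕ) : ℂ) := by
      exact_mod_cast key
    have hk : (dsym d k : ℂ) ≠ 0 := by exact_mod_cast (dsym_pos k).ne'
    rw [← sum_div, ← Nat.cast_sum, smul_eq_mul]
    field_simp
    linear_combination hkey
  · simp

lemma trace_tpow_outer {u : Fin d → ℂ} (hu : ∑ a, Complex.normSq (u a) = 1) (m : ℕ) :
    (tpow (outer u) m).trace = 1 := by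
  rw [tpow_outer]
  exact trace_outer_of_sum_normSq (by rw [sum_normSq_tensorPowVec, hu, one_pow])

lemma isStarProjection_tpow_outer {u : Fin d → ℂ} (hu : ∑ a, Complex.normSq (u a) = 1) (m : ℕ) :
    IsStarProjection (tpow (outer u) m) := by
  rw [tpow_outer]
  exact isStarProjection_outer (by rw [sum_normSq_tensorPowVec, hu, one_pow])

lemma piSym_eq_ofReal_smul (m : ℕ) : piSym d m = (((dsym d m : ℝ)⁻¹ : ℝ) : ℂ) • symProj d m := by
  rw [piSym]
  push_cast
  rfl

lemma relEnt_tpow_outer_piSym {u : Fin d → ℂ} (hu : ∑ a, Complex.normSq (u a) = 1) (m : ℕ) :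
    relEnt (tpow (outer u) m) (piSym d m) = Real.log (dsym d m) := by
  rw [piSym_eq_ofReal_smul, relEnt_smul_of_isStarProjection (isStarProjection_tpow_outer hu m)
    (trace_tpow_outer hu m) isStarProjection_symProj (tpow_outer_mul_symProj m u), Real.log_inv,
    neg_neg]

lemma symPTrace_tpow_outer {n k : ℕ} (h : k ≤ n) {u : Fin d → ℂ}
    (hu : ∑ a, Complex.normSq (u a) = 1) :
    symPTrace d h (tpow (outer u) n) = tpow (outer u) k := by
  rw [symPTrace, symProj_mul_tpow_outer, tpow_outer_mul_symProj, ptraceLast_tpow,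
    trace_outer_of_sum_normSq hu, one_pow, one_smul, symProj_mul_tpow_outer,
    tpow_outer_mul_symProj]

lemma symPTrace_piSym [NeZero d] {n k : ℕ} (h : k ≤ n) : symPTrace d h (piSym d n) = piSym d k := by
  have hn : (dsym d n : ℂ) ≠ 0 := by exact_mod_cast (dsym_pos n).ne'
  simp only [symPTrace, piSym, Matrix.mul_smul, Matrix.smul_mul, symProj_mul_self, ptraceLast_smul,
    ptraceLast_symProj h, smul_smul]
  field_simp

end SymmetricSubspace

theorem relEnt_decrease_pure_state_general
    (d k n : ℕ) (hd : 1 ≤ d) (hkn : k ≤ n)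
    (u : Fin d → ℂ) (hu : ∑ a, Complex.normSq (u a) = 1) :
    relEnt (tpow (outer u) n) (piSym d n) -
        relEnt (symPTrace d hkn (tpow (outer u) n)) (symPTrace d hkn (piSym d n)) =
      -Real.log ((dsym d k : ℝ) / (dsym d n : ℝ)) ∧
    -Real.log ((dsym d k : ℝ) / (dsym d n : ℝ)) =
      Real.log ((dsym d n : ℝ) / (dsym d k : ℝ)) := by
  have : NeZero d := ⟨by omega⟩
  refine ⟨?_, by rw [← Real.log_inv, inv_div]⟩
  rw [symPTrace_tpow_outer hkn hu, symPTrace_piSym hkn, relEnt_tpow_outer_piSym hu,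
    relEnt_tpow_outer_piSym hu, Real.log_div (by exact_mod_cast (dsym_pos k).ne')
      (by exact_mod_cast (dsym_pos n).ne')]
  ring

/-- For a pure input state `φ`, the decrease of relative entropy to the symmetric maximally
mixed state under the symmetrized partial trace equals `−log(d[k]/d[n]) = log(d[n]/d[k])`. -/
theorem relEnt_decrease_pure_state
    (d k n : ℕ) (hd : 1 ≤ d) (hk : 1 ≤ k) (hkn : k ≤ n)
    (u : Fin d → ℂ) (hu : ∑ a, Complex.normSq (u a) = 1) :
    relEnt (tpow (outer u) n) (piSym d n) -
        relEnt (symPTrace d hkn (tpow (outer u) n)) (symPTrace d hkn (piSym d n)) =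
      -Real.log ((dsym d k : ℝ) / (dsym d n : ℝ)) ∧
    -Real.log ((dsym d k : ℝ) / (dsym d n : ℝ)) =
      Real.log ((dsym d n : ℝ) / (dsym d k : ℝ)) :=
  relEnt_decrease_pure_state_general d k n hd hkn u hu
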